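/- arXiv:2206.09097 — 2 statements merged into one kernel-verified Lean document; each statement's English description precedes it below -/
import Mathlib

section
/- Let F be a field and x₁,…,x_{K+T}, y₁,…,y_T be K+2T pairwise distinct elements of F. Consider polynomials of degree ≤ K+T-1 determined by their values at x₁,…,x_{K+T}. The T×T matrix whose (i,j) entry is the Lagrange basis coefficient expressing the evaluation at y_i in terms of the value at x_{K+j} (i.e., L_{K+j}(y_i), where L_k is the Lagrange basis polynomial for the nodes x₁,…,x_{K+T}) is invertible. -/
open Polynomial

/-- Invertibility of the Lagrange-coefficient submatrix: with nodes
`x₁,…,x_{K+T}` and targets `y₁,…,y_T`, all `K+2T` points pairwise distinct, the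
`T×T` matrix with `(i,j)` entry `L_{K+j}(y_i)` — where `L_k` is the Lagrange
basis polynomial for the nodes `x₁,…,x_{K+T}` — is invertible. -/
theorem stmt10 {F : Type*} [Field F] (K T : ℕ)
    (x : Fin (K + T) → F) (y : Fin T → F)
    (hdist : Function.Injective (Fin.append x y)) :
    IsUnit (Matrix.of (fun i j : Fin T =>
      Polynomial.eval (y i)
        (Lagrange.basis Finset.univ x (Fin.natAdd K j)))) := by
  classical
  have hx : Function.Injective x := by
    intro a b h
    have := hdist (a₁ := Fin.castAdd T a) (a₂ := Fin.castAdd T b)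
      (by simpa [Fin.append_left] using h)
    simpa [Fin.ext_iff] using this
  have hxInj : Set.InjOn x (Finset.univ : Finset (Fin (K + T))) :=
    Function.Injective.injOn hx
  have hy : Function.Injective y := by
    intro a b h
    have := hdist (a₁ := Fin.natAdd (K + T) a) (a₂ := Fin.natAdd (K + T) b)
      (by simpa [Fin.append_right] using h)
    simpa [Fin.ext_iff] using this
  have hxy : ∀ k i, x k ≠ y i := by
    intro k i h
    have := hdist (a₁ := Fin.castAdd T k) (a₂ := Fin.natAdd (K + T) i)
      (by simpa [Fin.append_left, Fin.append_right] using h)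
    have hk := k.isLt
    simp [Fin.ext_iff] at this
    omega
  rw [Matrix.isUnit_iff_isUnit_det, isUnit_iff_ne_zero]
  intro hdet
  obtain ⟨v, hv, hmv⟩ := (Matrix.exists_mulVec_eq_zero_iff).2 hdet
  obtain ⟨j0, hj0⟩ := Function.ne_iff.1 hv
  have hT : 0 < T := j0.pos
  set p : F[X] := ∑ j : Fin T, C (v j) * Lagrange.basis Finset.univ x (Fin.natAdd K j) with hp
  -- p vanishes at x (castAdd k) and at y i
  have hevalx : ∀ k : Fin K, p.eval (x (Fin.castAdd T k)) = 0 := by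
    intro k
    rw [hp, eval_finset_sum]
    refine Finset.sum_eq_zero fun j _ => ?_
    rw [eval_mul, eval_C, Lagrange.eval_basis_of_ne (by simp [Fin.ext_iff]; omega)
      (Finset.mem_univ _), mul_zero]
  have hevaly : ∀ i : Fin T, p.eval (y i) = 0 := by
    intro i
    rw [hp, eval_finset_sum]
    have := congrFun hmv i
    simp only [Matrix.mulVec, dotProduct, Pi.zero_apply, Matrix.of_apply] at this
    rw [← this]
    exact Finset.sum_congr rfl fun j _ => by rw [eval_mul, eval_C, mul_comm]
  -- the K + T evaluation points, all distinct
  have hfinj : Function.Injective (Sum.elim (fun k : Fin K => x (Fin.castAdd T k)) y) := by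
    rintro (a | a) (b | b) h <;> simp only [Sum.elim_inl, Sum.elim_inr] at h
    · exact congrArg Sum.inl (by simpa [Fin.ext_iff] using hx h)
    · exact absurd h (hxy _ _)
    · exact absurd h.symm (hxy _ _)
    · exact congrArg Sum.inr (hy h)
  have hdeg : p.natDegree < K + T := by
    have hle : p.natDegree ≤ K + T - 1 := by
      refine natDegree_sum_le_of_forall_le _ _ fun j _ => ?_
      refine (natDegree_C_mul_le _ _).trans ?_
      rw [Lagrange.natDegree_basis hxInj (Finset.mem_univ _)]
      simp
    omega
  have hp0 : p = 0 := by
    refine Polynomial.eq_zero_of_natDegree_lt_card_of_eval_eq_zero p hfinj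
      (fun i => ?_) (by simpa using hdeg)
    rcases i with k | i
    · exact hevalx k
    · exact hevaly i
  -- evaluate p at x (natAdd K j0) to conclude v j0 = 0
  have : p.eval (x (Fin.natAdd K j0)) = v j0 := by
    rw [hp, eval_finset_sum, Finset.sum_eq_single j0]
    · rw [eval_mul, eval_C, Lagrange.eval_basis_self hxInj (Finset.mem_univ _), mul_one]
    · intro b _ hb
      rw [eval_mul, eval_C,
        Lagrange.eval_basis_of_ne (fun h => hb (by simpa [Fin.ext_iff] using h))
          (Finset.mem_univ _), mul_zero]
    · simp
  rw [hp0] at this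
  simp at this
  exact hj0 this.symm
end

section
/- Let F be a finite field, and fix pairwise distinct β₁,…,β_{K+T} ∈ F and pairwise distinct α₁,…,α_N ∈ F disjoint from the β's. For each of two secrets h, h' ∈ F^K, the distribution of the share vector (φ(α_n))_{n∈S} for any fixed S ⊆ [N] with |S| ≤ T is identical, where φ is the degree-(K+T-1) Lagrange encoding of the secret padded with T i.i.d. uniform noise symbols at β_{K+1},…,β_{K+T}. Consequently the mutual information I(h ; (φ(α_n))_{n∈S}) = 0 when h is any random secret. -/
/-!
Shifting the noise by a fixed vector `c` adds to the encoding polynomial the interpolant of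
`(h' - h, c)`. Since `|S| ≤ T`, the noise `c` can be chosen so that this interpolant is the
polynomial of degree `< K + |S|` taking the values `h' - h` at `β₁,…,β_K` and `0` at every
`α_n`, `n ∈ S`; then the shares of `(h, z)` and of `(h', z + c)` coincide. As `z ↦ z + c`
preserves the uniform distribution, the share distribution does not depend on the secret.
-/

open Polynomial Finset

theorem PMF.map_uniformOfFintype_equiv {A : Type*} [Fintype A] [Nonempty A] (e : A ≃ A) :
    (PMF.uniformOfFintype A).map e = PMF.uniformOfFintype A := by
  ext b
  rw [PMF.map_apply, tsum_eq_single (e.symm b) fun a ha => if_neg fun hb => ha (by simp [hb])]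
  simp

theorem Fin.append_add {M : Type*} [Add M] {m n : ℕ} (a b : Fin m → M) (c d : Fin n → M) :
    Fin.append (a + b) (c + d) = Fin.append a c + Fin.append b d := by
  funext i
  refine Fin.addCases (fun i => ?_) (fun i => ?_) i <;> simp

section LagrangeShares

variable {F ι : Type*} [Field F] {K T : ℕ}
  (β : Fin (K + T) → F) (α : ι → F) (S : Finset ι)

noncomputable def lagrangeShares (h : Fin K → F) (z : Fin T → F) : S → F :=
  fun n => (Lagrange.interpolate univ β (Fin.append h z)).eval (α n)

theorem lagrangeShares_add (h d : Fin K → F) (z c : Fin T → F) :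
    lagrangeShares β α S (h + d) (z + c) =
      lagrangeShares β α S h z + lagrangeShares β α S d c := by
  funext n
  simp only [lagrangeShares, Fin.append_add, map_add, eval_add, Pi.add_apply]

variable {β α S}

theorem exists_lagrangeShares_eq_zero (hβ : Function.Injective β) (hα : Set.InjOn α S)
    (hβα : ∀ i, ∀ n ∈ S, β i ≠ α n) (hS : #S ≤ T) (d : Fin K → F) :
    ∃ c : Fin T → F, lagrangeShares β α S d c = 0 := by
  classical
  let v : Fin K ⊕ S → F := Sum.elim (β ∘ Fin.castAdd T) (α ∘ Subtype.val)
  have hv : Function.Injective v :=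
    (hβ.comp (Fin.castAdd_injective K T)).sumElim hα.injective
      fun i n => hβα _ n n.2
  let Q := Lagrange.interpolate univ v (Sum.elim d 0)
  have hQ_node (i) : Q.eval (v i) = Sum.elim d 0 i :=
    Lagrange.eval_interpolate_at_node _ hv.injOn (mem_univ i)
  let c : Fin T → F := fun j => Q.eval (β (Fin.natAdd K j))
  refine ⟨c, ?_⟩
  have hQ : Lagrange.interpolate univ β (Fin.append d c) = Q := by
    refine (Lagrange.eq_interpolate_of_eval_eq _ hβ.injOn ?_ fun i _ => ?_).symm
    · calc Q.degree < #(univ : Finset (Fin K ⊕ S)) := Lagrange.degree_interpolate_lt _ hv.injOn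
        _ ≤ #(univ : Finset (Fin (K + T))) := by
          simp only [card_univ, Fintype.card_sum, Fintype.card_fin, Fintype.card_coe]
          exact_mod_cast Nat.add_le_add_left hS K
    · refine Fin.addCases (fun k => ?_) (fun j => ?_) i
      · simpa [v] using hQ_node (.inl k)
      · simp [c]
  funext n
  simpa [lagrangeShares, hQ, v] using hQ_node (.inr n)

variable [Fintype F]

theorem map_uniformOfFintype_lagrangeShares (hβ : Function.Injective β) (hα : Set.InjOn α S)
    (hβα : ∀ i, ∀ n ∈ S, β i ≠ α n) (hS : #S ≤ T) (h h' : Fin K → F) :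
    (PMF.uniformOfFintype (Fin T → F)).map (lagrangeShares β α S h) =
      (PMF.uniformOfFintype (Fin T → F)).map (lagrangeShares β α S h') := by
  obtain ⟨c, hc⟩ := exists_lagrangeShares_eq_zero hβ hα hβα hS (h' - h)
  have hshift : lagrangeShares β α S h = lagrangeShares β α S h' ∘ Equiv.addRight c := by
    funext z
    simpa [hc] using (lagrangeShares_add β α S h (h' - h) z c).symm
  rw [hshift, ← PMF.map_comp, PMF.map_uniformOfFintype_equiv]

end LagrangeShares

theorem stmt14_general {F : Type*} [Field F] [Fintype F]
    (K T N : ℕ)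
    (β : Fin (K + T) → F) (α : Fin N → F)
    (hdist : Function.Injective (Fin.append β α))
    (S : Finset (Fin N)) (hS : S.card ≤ T) :
    (∀ h h' : Fin K → F,
      (PMF.uniformOfFintype (Fin T → F)).map
          (fun z => fun n : S =>
            Polynomial.eval (α n)
              (Lagrange.interpolate Finset.univ β (Fin.append h z)))
        = (PMF.uniformOfFintype (Fin T → F)).map
            (fun z => fun n : S =>
              Polynomial.eval (α n)
                (Lagrange.interpolate Finset.univ β (Fin.append h' z)))) ∧
    (∀ κ : PMF (Fin K → F),
      ∃ ν : PMF (S → F),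
        (κ.bind fun h =>
          ((PMF.uniformOfFintype (Fin T → F)).map
            (fun z => fun n : S =>
              Polynomial.eval (α n)
                (Lagrange.interpolate Finset.univ β (Fin.append h z)))).map
            (fun y => (h, y)))
          = κ.bind fun h => ν.map (fun y => (h, y))) := by
  obtain ⟨hβ, hα, hβα⟩ := Fin.append_injective_iff.mp hdist
  have key := map_uniformOfFintype_lagrangeShares hβ hα.injOn (fun i n _ => hβα i n) hS
  refine ⟨key, fun κ => ⟨(PMF.uniformOfFintype _).map (lagrangeShares β α S 0), ?_⟩⟩
  congr 1
  funext h
  exact congrArg (PMF.map _) (key h 0)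

/-- Perfect T-privacy of Lagrange multi-secret sharing: for any two secrets
`h, h' ∈ F^K`, the distribution of the share vector `(φ(α_n))_{n∈S}` (with the
secret placed at `β₁,…,β_K` and i.i.d. uniform noise at `β_{K+1},…,β_{K+T}`)
is identical for any fixed `S ⊆ [N]` with `|S| ≤ T`; consequently, for any
random secret with distribution `κ`, the secret and the shares are independent
(equivalently, their mutual information is zero): the joint distribution
factorizes as `κ` times a fixed share distribution `ν`. -/
theorem stmt14 {F : Type*} [Field F] [Fintype F] [DecidableEq F]
    (K T N : ℕ) (hK : 0 < K) (hT : 0 < T)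
    (β : Fin (K + T) → F) (α : Fin N → F)
    (hdist : Function.Injective (Fin.append β α))
    (S : Finset (Fin N)) (hS : S.card ≤ T) :
    (∀ h h' : Fin K → F,
      (PMF.uniformOfFintype (Fin T → F)).map
          (fun z => fun n : S =>
            Polynomial.eval (α n)
              (Lagrange.interpolate Finset.univ β (Fin.append h z)))
        = (PMF.uniformOfFintype (Fin T → F)).map
            (fun z => fun n : S =>
              Polynomial.eval (α n)
                (Lagrange.interpolate Finset.univ β (Fin.append h' z)))) ∧
    (∀ κ : PMF (Fin K → F),
      ∃ ν : PMF (S → F),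
        (κ.bind fun h =>
          ((PMF.uniformOfFintype (Fin T → F)).map
            (fun z => fun n : S =>
              Polynomial.eval (α n)
                (Lagrange.interpolate Finset.univ β (Fin.append h z)))).map
            (fun y => (h, y)))
          = κ.bind fun h => ν.map (fun y => (h, y))) :=
  stmt14_general K T N β α hdist S hS
end
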